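/- arXiv:2011.03156 — 4 statements merged into one kernel-verified Lean document; each statement's English description precedes it below -/
import Mathlib

section
/- Let X₀, X₁ be real-valued random variables with E|X₀| < ∞ and E|X₁| < ∞, with CDFs F₀, F₁ and generalized inverses (quantile functions) F₀^{[-1]}, F₁^{[-1]}. Define T₀ = {t ∈ ℝ : F₁(t) < F₀(t)} and P₁ = {p ∈ (0,1) : F₀^{[-1]}(p) < F₁^{[-1]}(p)}. Then 0 ≤ ∫_{T₀} (F₀(t) - F₁(t)) dt = ∫_{P₁} (F₁^{[-1]}(p) - F₀^{[-1]}(p)) dp < ∞. -/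
open MeasureTheory Set Filter Topology ProbabilityTheory
open scoped ENNReal NNReal

section helpers

variable {F : ℝ → ℝ}

lemma quantile_set_nonempty (h1 : Tendsto F atTop (𝓝 1)) {p : ℝ} (hp1 : p < 1) :
    {x : ℝ | p ≤ F x}.Nonempty := by
  obtain ⟨x, hx⟩ := (h1.eventually (eventually_gt_nhds hp1)).exists
  exact ⟨x, hx.le⟩

lemma quantile_set_bddBelow (h0 : Tendsto F atBot (𝓝 0)) {p : ℝ} (hp0 : 0 < p) :
    BddBelow {x : ℝ | p ≤ F x} := by
  obtain ⟨b, hb⟩ := (h0.eventually (eventually_lt_nhds hp0)).exists_forall_of_atBot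
  exact ⟨b, fun x hx => le_of_not_gt fun hxb => absurd hx (not_le.mpr (hb x hxb.le))⟩

lemma quantile_galois (hmono : Monotone F)
    (hrc : ∀ x, ContinuousWithinAt F (Ici x) x)
    (h0 : Tendsto F atBot (𝓝 0)) (h1 : Tendsto F atTop (𝓝 1))
    {p : ℝ} (hp0 : 0 < p) (hp1 : p < 1) (t : ℝ) :
    sInf {x : ℝ | p ≤ F x} ≤ t ↔ p ≤ F t := by
  have hne := quantile_set_nonempty h1 hp1
  have hbdd := quantile_set_bddBelow h0 hp0
  set a := sInf {x : ℝ | p ≤ F x} with ha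
  have hkey : p ≤ F a := by
    have htd : Tendsto F (𝓝[>] a) (𝓝 (F a)) :=
      (hrc a).mono_left (nhdsWithin_mono _ Ioi_subset_Ici_self)
    refine ge_of_tendsto htd ?_
    refine eventually_nhdsWithin_of_forall fun x hx => ?_
    obtain ⟨z, hz, hzx⟩ := exists_lt_of_csInf_lt hne hx
    exact le_trans hz (hmono hzx.le)
  constructor
  · intro hat; exact hkey.trans (hmono hat)
  · intro ht; exact csInf_le hbdd ht

lemma quantile_monotoneOn (h0 : Tendsto F atBot (𝓝 0)) (h1 : Tendsto F atTop (𝓝 1)) :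
    MonotoneOn (fun p => sInf {x : ℝ | p ≤ F x}) (Ioo (0:ℝ) 1) := fun _ hp _ hq hpq =>
  csInf_le_csInf (quantile_set_bddBelow h0 hp.1) (quantile_set_nonempty h1 hq.2)
    fun _ hx => le_trans hpq hx

lemma ordConnected_sep_lt {Q : ℝ → ℝ} (hmono : MonotoneOn Q (Ioo (0:ℝ) 1)) (a : ℝ) :
    OrdConnected {p ∈ Ioo (0:ℝ) 1 | Q p < a} := by
  refine ⟨fun x hx y hy z hz => ?_⟩
  obtain ⟨hxI, _⟩ := hx
  obtain ⟨hyI, hyQ⟩ := hy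
  have hzI : z ∈ Ioo (0:ℝ) 1 := ⟨lt_of_lt_of_le hxI.1 hz.1, lt_of_le_of_lt hz.2 hyI.2⟩
  exact ⟨hzI, lt_of_le_of_lt (hmono hzI hyI hz.2) hyQ⟩

lemma indicator_measurable_of_monotoneOn {Q : ℝ → ℝ}
    (hmono : MonotoneOn Q (Ioo (0:ℝ) 1)) :
    Measurable ((Ioo (0:ℝ) 1).indicator Q) := by
  apply measurable_of_Iio
  intro a
  by_cases ha : (0:ℝ) < a
  · have h : (Ioo (0:ℝ) 1).indicator Q ⁻¹' Iio a
        = {p ∈ Ioo (0:ℝ) 1 | Q p < a} ∪ (Ioo (0:ℝ) 1)ᶜ := by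
      ext p
      by_cases hp : p ∈ Ioo (0:ℝ) 1
      · rw [mem_preimage, indicator_of_mem hp]
        simp only [mem_Iio, mem_union, mem_sep_iff, mem_compl_iff]
        exact ⟨fun h => Or.inl ⟨hp, h⟩, fun h => h.elim (fun h => h.2) (fun h => absurd hp h)⟩
      · rw [mem_preimage, indicator_of_notMem hp]
        simp only [mem_Iio, mem_union, mem_compl_iff]
        exact iff_of_true ha (Or.inr hp)
    rw [h]
    exact ((ordConnected_sep_lt hmono a).measurableSet).union measurableSet_Ioo.compl
  · have h : (Ioo (0:ℝ) 1).indicator Q ⁻¹' Iio a = {p ∈ Ioo (0:ℝ) 1 | Q p < a} := by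
      ext p
      by_cases hp : p ∈ Ioo (0:ℝ) 1
      · rw [mem_preimage, indicator_of_mem hp]
        simp only [mem_Iio, mem_sep_iff]
        exact ⟨fun h => ⟨hp, h⟩, fun h => h.2⟩
      · rw [mem_preimage, indicator_of_notMem hp]
        simp only [mem_Iio, mem_sep_iff]
        exact iff_of_false ha (fun h => hp h.1)
    rw [h]
    exact (ordConnected_sep_lt hmono a).measurableSet

end helpers

theorem cdf_quantile_area_eq
    {Ω : Type*} [MeasurableSpace Ω] (P : Measure Ω) [IsProbabilityMeasure P]
    (X₀ X₁ : Ω → ℝ) (h₀ : Integrable X₀ P) (h₁ : Integrable X₁ P)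
    (F₀ F₁ : ℝ → ℝ)
    (hF₀ : ∀ t, F₀ t = (P {ω | X₀ ω ≤ t}).toReal)
    (hF₁ : ∀ t, F₁ t = (P {ω | X₁ ω ≤ t}).toReal)
    (Q₀ Q₁ : ℝ → ℝ)
    (hQ₀ : ∀ p, Q₀ p = sInf {x : ℝ | p ≤ F₀ x})
    (hQ₁ : ∀ p, Q₁ p = sInf {x : ℝ | p ≤ F₁ x}) :
    IntegrableOn (fun t => F₀ t - F₁ t) {t : ℝ | F₁ t < F₀ t} volume ∧
    0 ≤ ∫ t in {t : ℝ | F₁ t < F₀ t}, (F₀ t - F₁ t) ∧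
    (∫ t in {t : ℝ | F₁ t < F₀ t}, (F₀ t - F₁ t))
      = ∫ p in {p ∈ Ioo (0:ℝ) 1 | Q₀ p < Q₁ p}, (Q₁ p - Q₀ p) := by
  classical
  -- measurable representatives
  obtain ⟨Y₀, hY₀m, hY₀ae⟩ := h₀.1.aemeasurable
  obtain ⟨Y₁, hY₁m, hY₁ae⟩ := h₁.1.aemeasurable
  have hP₀ : ∀ t, P {ω | X₀ ω ≤ t} = P {ω | Y₀ ω ≤ t} := fun t =>
    measure_congr (hY₀ae.mono fun ω hω => by
      simp only [eq_iff_iff]; change X₀ ω ≤ t ↔ Y₀ ω ≤ t; rw [hω])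
  have hP₁ : ∀ t, P {ω | X₁ ω ≤ t} = P {ω | Y₁ ω ≤ t} := fun t =>
    measure_congr (hY₁ae.mono fun ω hω => by
      simp only [eq_iff_iff]; change X₁ ω ≤ t ↔ Y₁ ω ≤ t; rw [hω])
  -- identify F₀, F₁ with cdf's
  set μ₀ : Measure ℝ := P.map Y₀ with hμ₀
  set μ₁ : Measure ℝ := P.map Y₁ with hμ₁
  haveI : IsProbabilityMeasure μ₀ := Measure.isProbabilityMeasure_map hY₀m.aemeasurable
  haveI : IsProbabilityMeasure μ₁ := Measure.isProbabilityMeasure_map hY₁m.aemeasurable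
  have hF₀c : F₀ = ⇑(cdf μ₀) := by
    funext t
    rw [hF₀ t, hP₀ t, cdf_eq_real, measureReal_def]
    congr 1
    rw [hμ₀, Measure.map_apply hY₀m measurableSet_Iic]
    rfl
  have hF₁c : F₁ = ⇑(cdf μ₁) := by
    funext t
    rw [hF₁ t, hP₁ t, cdf_eq_real, measureReal_def]
    congr 1
    rw [hμ₁, Measure.map_apply hY₁m measurableSet_Iic]
    rfl
  have hmono₀ : Monotone F₀ := by rw [hF₀c]; exact monotone_cdf μ₀
  have hmono₁ : Monotone F₁ := by rw [hF₁c]; exact monotone_cdf μ₁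
  have hrc₀ : ∀ x, ContinuousWithinAt F₀ (Ici x) x := by
    rw [hF₀c]; exact fun x => (cdf μ₀).right_continuous x
  have hrc₁ : ∀ x, ContinuousWithinAt F₁ (Ici x) x := by
    rw [hF₁c]; exact fun x => (cdf μ₁).right_continuous x
  have h0₀ : Tendsto F₀ atBot (𝓝 0) := by rw [hF₀c]; exact tendsto_cdf_atBot μ₀
  have h0₁ : Tendsto F₁ atBot (𝓝 0) := by rw [hF₁c]; exact tendsto_cdf_atBot μ₁
  have h1₀ : Tendsto F₀ atTop (𝓝 1) := by rw [hF₀c]; exact tendsto_cdf_atTop μ₀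
  have h1₁ : Tendsto F₁ atTop (𝓝 1) := by rw [hF₁c]; exact tendsto_cdf_atTop μ₁
  have hnn₀ : ∀ t, 0 ≤ F₀ t := by rw [hF₀c]; exact fun t => cdf_nonneg μ₀ t
  have hnn₁ : ∀ t, 0 ≤ F₁ t := by rw [hF₁c]; exact fun t => cdf_nonneg μ₁ t
  have hle1₀ : ∀ t, F₀ t ≤ 1 := by rw [hF₀c]; exact fun t => cdf_le_one μ₀ t
  have hle1₁ : ∀ t, F₁ t ≤ 1 := by rw [hF₁c]; exact fun t => cdf_le_one μ₁ t
  have hmF₀ : Measurable F₀ := hmono₀.measurable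
  have hmF₁ : Measurable F₁ := hmono₁.measurable
  -- Galois connections
  have hg₀ : ∀ p ∈ Ioo (0:ℝ) 1, ∀ t, Q₀ p ≤ t ↔ p ≤ F₀ t := fun p hp t => by
    rw [hQ₀]; exact quantile_galois hmono₀ hrc₀ h0₀ h1₀ hp.1 hp.2 t
  have hg₁ : ∀ p ∈ Ioo (0:ℝ) 1, ∀ t, Q₁ p ≤ t ↔ p ≤ F₁ t := fun p hp t => by
    rw [hQ₁]; exact quantile_galois hmono₁ hrc₁ h0₁ h1₁ hp.1 hp.2 t
  -- monotone on Ioo and measurability of indicator versions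
  have hQmono₀ : MonotoneOn Q₀ (Ioo (0:ℝ) 1) := by
    intro p hp q hq h
    rw [hQ₀ p, hQ₀ q]
    exact quantile_monotoneOn h0₀ h1₀ hp hq h
  have hQmono₁ : MonotoneOn Q₁ (Ioo (0:ℝ) 1) := by
    intro p hp q hq h
    rw [hQ₁ p, hQ₁ q]
    exact quantile_monotoneOn h0₁ h1₁ hp hq h
  have hmQ₀ : Measurable ((Ioo (0:ℝ) 1).indicator Q₀) :=
    indicator_measurable_of_monotoneOn hQmono₀
  have hmQ₁ : Measurable ((Ioo (0:ℝ) 1).indicator Q₁) :=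
    indicator_measurable_of_monotoneOn hQmono₁
  -- the sets
  set T₀ : Set ℝ := {t : ℝ | F₁ t < F₀ t} with hT₀def
  set P₁ : Set ℝ := {p ∈ Ioo (0:ℝ) 1 | Q₀ p < Q₁ p} with hP₁def
  have hT₀m : MeasurableSet T₀ := measurableSet_lt hmF₁ hmF₀
  have hP₁m : MeasurableSet P₁ := by
    have : P₁ = Ioo (0:ℝ) 1 ∩
        {p | (Ioo (0:ℝ) 1).indicator Q₀ p < (Ioo (0:ℝ) 1).indicator Q₁ p} := by
      ext p
      constructor
      · rintro ⟨hp, hq⟩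
        exact ⟨hp, by rwa [mem_setOf_eq, indicator_of_mem hp, indicator_of_mem hp]⟩
      · rintro ⟨hp, hq⟩
        rw [mem_setOf_eq, indicator_of_mem hp, indicator_of_mem hp] at hq
        exact ⟨hp, hq⟩
    rw [this]
    exact measurableSet_Ioo.inter (measurableSet_lt hmQ₀ hmQ₁)
  have hP₁sub : P₁ ⊆ Ioo (0:ℝ) 1 := fun p hp => hp.1
  -- The central quantity
  set A : ℝ≥0∞ := ∫⁻ t, ENNReal.ofReal (F₀ t - F₁ t) with hAdef
  -- Tonelli swap
  have hswap : A = ∫⁻ p, volume {t | F₁ t < p ∧ p ≤ F₀ t} := by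
    set S : Set (ℝ × ℝ) := {q | F₁ q.1 < q.2 ∧ q.2 ≤ F₀ q.1} with hSdef
    have hSm : MeasurableSet S :=
      (measurableSet_lt (hmF₁.comp measurable_fst) measurable_snd).inter
        (measurableSet_le measurable_snd (hmF₀.comp measurable_fst))
    have h1 : (volume.prod volume) S = ∫⁻ t, volume {p | F₁ t < p ∧ p ≤ F₀ t} :=
      Measure.prod_apply hSm
    have h2 : (volume.prod volume) S = ∫⁻ p, volume {t | F₁ t < p ∧ p ≤ F₀ t} :=
      Measure.prod_apply_symm hSm
    have h3 : ∀ t : ℝ, volume {p | F₁ t < p ∧ p ≤ F₀ t} = ENNReal.ofReal (F₀ t - F₁ t) := by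
      intro t
      have : {p | F₁ t < p ∧ p ≤ F₀ t} = Ioc (F₁ t) (F₀ t) := rfl
      rw [this, Real.volume_Ioc]
    rw [hAdef, ← h2, h1]
    exact lintegral_congr fun t => (h3 t).symm
  -- Finiteness
  have hAfin : A < ⊤ := by
    have hpt : ∀ t, ENNReal.ofReal (F₀ t - F₁ t) ≤ P {ω | Y₀ ω ≤ t ∧ t < Y₁ ω} := by
      intro t
      have hsub : {ω | Y₀ ω ≤ t} ⊆ {ω | Y₁ ω ≤ t} ∪ {ω | Y₀ ω ≤ t ∧ t < Y₁ ω} := by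
        intro ω hω
        by_cases h : Y₁ ω ≤ t
        · exact Or.inl h
        · exact Or.inr ⟨hω, not_le.1 h⟩
      have hle : P {ω | Y₀ ω ≤ t} ≤ P {ω | Y₁ ω ≤ t} + P {ω | Y₀ ω ≤ t ∧ t < Y₁ ω} :=
        le_trans (measure_mono hsub) (measure_union_le _ _)
      have hre : F₀ t - F₁ t ≤ (P {ω | Y₀ ω ≤ t ∧ t < Y₁ ω}).toReal := by
        rw [hF₀ t, hF₁ t, hP₀ t, hP₁ t, sub_le_iff_le_add]
        rw [← ENNReal.toReal_add (measure_ne_top P _) (measure_ne_top P _)]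
        rw [add_comm]
        exact ENNReal.toReal_mono (by finiteness) hle
      calc ENNReal.ofReal (F₀ t - F₁ t) ≤ ENNReal.ofReal (P {ω | Y₀ ω ≤ t ∧ t < Y₁ ω}).toReal :=
            ENNReal.ofReal_le_ofReal hre
        _ = P {ω | Y₀ ω ≤ t ∧ t < Y₁ ω} := ENNReal.ofReal_toReal (measure_ne_top P _)
    have hS2m : MeasurableSet {q : ℝ × Ω | Y₀ q.2 ≤ q.1 ∧ q.1 < Y₁ q.2} :=
      (measurableSet_le (hY₀m.comp measurable_snd) measurable_fst).inter
        (measurableSet_lt measurable_fst (hY₁m.comp measurable_snd))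
    have hswap2 : ∫⁻ t, P {ω | Y₀ ω ≤ t ∧ t < Y₁ ω}
        = ∫⁻ ω, ENNReal.ofReal (Y₁ ω - Y₀ ω) ∂P := by
      have h1 : (volume.prod P) {q : ℝ × Ω | Y₀ q.2 ≤ q.1 ∧ q.1 < Y₁ q.2}
          = ∫⁻ t, P {ω | Y₀ ω ≤ t ∧ t < Y₁ ω} := Measure.prod_apply hS2m
      have h2 : (volume.prod P) {q : ℝ × Ω | Y₀ q.2 ≤ q.1 ∧ q.1 < Y₁ q.2}
          = ∫⁻ ω, volume {t | Y₀ ω ≤ t ∧ t < Y₁ ω} ∂P := Measure.prod_apply_symm hS2m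
      rw [← h1, h2]
      refine lintegral_congr fun ω => ?_
      have : {t | Y₀ ω ≤ t ∧ t < Y₁ ω} = Ico (Y₀ ω) (Y₁ ω) := rfl
      rw [this, Real.volume_Ico]
    have hbound : ∫⁻ ω, ENNReal.ofReal (Y₁ ω - Y₀ ω) ∂P
        ≤ (∫⁻ ω, (‖Y₁ ω‖₊ : ℝ≥0∞) ∂P) + ∫⁻ ω, (‖Y₀ ω‖₊ : ℝ≥0∞) ∂P := by
      rw [← lintegral_add_left (hY₁m.nnnorm.coe_nnreal_ennreal)]
      refine lintegral_mono fun ω => ?_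
      calc ENNReal.ofReal (Y₁ ω - Y₀ ω) ≤ ENNReal.ofReal (|Y₁ ω| + |Y₀ ω|) :=
            ENNReal.ofReal_le_ofReal
              (le_trans (le_abs_self _) (le_trans (abs_sub _ _) le_rfl))
        _ = ENNReal.ofReal |Y₁ ω| + ENNReal.ofReal |Y₀ ω| :=
            ENNReal.ofReal_add (abs_nonneg _) (abs_nonneg _)
        _ = (‖Y₁ ω‖₊ : ℝ≥0∞) + (‖Y₀ ω‖₊ : ℝ≥0∞) := by
            rw [← enorm_eq_nnnorm, ← enorm_eq_nnnorm, Real.enorm_eq_ofReal_abs, Real.enorm_eq_ofReal_abs]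
    have hfin₀ : ∫⁻ ω, (‖Y₀ ω‖₊ : ℝ≥0∞) ∂P < ⊤ := by
      have : ∫⁻ ω, (‖Y₀ ω‖₊ : ℝ≥0∞) ∂P = ∫⁻ ω, (‖X₀ ω‖₊ : ℝ≥0∞) ∂P :=
        lintegral_congr_ae (hY₀ae.mono fun ω h => by
          show ((‖Y₀ ω‖₊ : ℝ≥0∞)) = ((‖X₀ ω‖₊ : ℝ≥0∞)); rw [h])
      rw [this]
      exact h₀.2
    have hfin₁ : ∫⁻ ω, (‖Y₁ ω‖₊ : ℝ≥0∞) ∂P < ⊤ := by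
      have : ∫⁻ ω, (‖Y₁ ω‖₊ : ℝ≥0∞) ∂P = ∫⁻ ω, (‖X₁ ω‖₊ : ℝ≥0∞) ∂P :=
        lintegral_congr_ae (hY₁ae.mono fun ω h => by
          show ((‖Y₁ ω‖₊ : ℝ≥0∞)) = ((‖X₁ ω‖₊ : ℝ≥0∞)); rw [h])
      rw [this]
      exact h₁.2
    calc A ≤ ∫⁻ t, P {ω | Y₀ ω ≤ t ∧ t < Y₁ ω} := lintegral_mono hpt
      _ = ∫⁻ ω, ENNReal.ofReal (Y₁ ω - Y₀ ω) ∂P := hswap2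
      _ ≤ (∫⁻ ω, (‖Y₁ ω‖₊ : ℝ≥0∞) ∂P) + ∫⁻ ω, (‖Y₀ ω‖₊ : ℝ≥0∞) ∂P := hbound
      _ < ⊤ := ENNReal.add_lt_top.2 ⟨hfin₁, hfin₀⟩
  -- t-side restriction
  have hTres : A = ∫⁻ t in T₀, ENNReal.ofReal (F₀ t - F₁ t) := by
    rw [hAdef, ← lintegral_indicator hT₀m]
    refine lintegral_congr fun t => ?_
    by_cases ht : t ∈ T₀
    · rw [indicator_of_mem ht]
    · rw [indicator_of_notMem ht]
      rw [ENNReal.ofReal_eq_zero]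
      exact sub_nonpos.2 (not_lt.1 ht)
  -- p-side: fibers over p in (0,1)
  have hVfib : ∀ p ∈ Ioo (0:ℝ) 1, {t | F₁ t < p ∧ p ≤ F₀ t} = Ico (Q₀ p) (Q₁ p) := by
    intro p hp
    ext t
    simp only [mem_setOf_eq, mem_Ico]
    constructor
    · rintro ⟨h1, h2⟩
      refine ⟨(hg₀ p hp t).2 h2, lt_of_not_ge fun hc => ?_⟩
      exact not_le.2 h1 ((hg₁ p hp t).1 hc)
    · rintro ⟨h1, h2⟩
      refine ⟨not_le.1 fun hc => not_le.2 h2 ((hg₁ p hp t).2 hc), (hg₀ p hp t).1 h1⟩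
  have hVzero : ∀ p : ℝ, p ∉ Ioo (0:ℝ) 1 → p ≠ 1 → volume {t | F₁ t < p ∧ p ≤ F₀ t} = 0 := by
    intro p hp hp1
    have hp' : ¬(0 < p ∧ p < 1) := fun hc => hp (mem_Ioo.mpr hc)
    have hcases : p ≤ 0 ∨ 1 < p := by
      rcases not_and_or.1 hp' with h | h
      · exact Or.inl (not_lt.1 h)
      · exact Or.inr (lt_of_le_of_ne (not_lt.1 h) (Ne.symm hp1))
    have hemp : {t | F₁ t < p ∧ p ≤ F₀ t} = (∅ : Set ℝ) := by
      ext t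
      simp only [mem_setOf_eq, mem_empty_iff_false, iff_false, not_and, not_le]
      intro h1
      rcases hcases with h | h
      · exact absurd (lt_of_le_of_lt (hnn₁ t) h1) (not_lt.2 h)
      · exact lt_of_le_of_lt (hle1₀ t) h
    rw [hemp, measure_empty]
  -- restrict the p-integral to Ioo 0 1
  have hae1 : ∀ᵐ p : ℝ, p ≠ 1 := by
    rw [ae_iff]
    simp only [ne_eq, not_not, setOf_eq_eq_singleton]
    exact measure_singleton 1
  have hpIoo : ∫⁻ p, volume {t | F₁ t < p ∧ p ≤ F₀ t}
      = ∫⁻ p in Ioo (0:ℝ) 1, volume {t | F₁ t < p ∧ p ≤ F₀ t} := by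
    rw [← lintegral_indicator measurableSet_Ioo]
    refine lintegral_congr_ae ?_
    filter_upwards [hae1] with p hp
    by_cases hmem : p ∈ Ioo (0:ℝ) 1
    · rw [indicator_of_mem hmem]
    · rw [indicator_of_notMem hmem, hVzero p hmem hp]
  have hpQ : ∫⁻ p in Ioo (0:ℝ) 1, volume {t | F₁ t < p ∧ p ≤ F₀ t}
      = ∫⁻ p in Ioo (0:ℝ) 1, ENNReal.ofReal (Q₁ p - Q₀ p) := by
    refine setLIntegral_congr_fun_ae measurableSet_Ioo (ae_of_all _ fun p hp => ?_)
    rw [hVfib p hp, Real.volume_Ico]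
  have hpP₁ : ∫⁻ p in Ioo (0:ℝ) 1, ENNReal.ofReal (Q₁ p - Q₀ p)
      = ∫⁻ p in P₁, ENNReal.ofReal (Q₁ p - Q₀ p) := by
    have h1 : ∫⁻ p in Ioo (0:ℝ) 1, ENNReal.ofReal (Q₁ p - Q₀ p)
        = ∫⁻ p in Ioo (0:ℝ) 1, P₁.indicator (fun p => ENNReal.ofReal (Q₁ p - Q₀ p)) p := by
      refine setLIntegral_congr_fun_ae measurableSet_Ioo (ae_of_all _ fun p hp => ?_)
      by_cases h : Q₀ p < Q₁ p
      · rw [indicator_of_mem (show p ∈ P₁ from ⟨hp, h⟩)]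
      · rw [indicator_of_notMem (fun hc : p ∈ P₁ => h hc.2)]
        exact ENNReal.ofReal_eq_zero.2 (sub_nonpos.2 (not_lt.1 h))
    have h2 : ∫⁻ p in Ioo (0:ℝ) 1, P₁.indicator (fun p => ENNReal.ofReal (Q₁ p - Q₀ p)) p
        = ∫⁻ p in P₁, ENNReal.ofReal (Q₁ p - Q₀ p) := by
      rw [lintegral_indicator hP₁m, Measure.restrict_restrict hP₁m,
        inter_eq_self_of_subset_left hP₁sub]
    rw [h1, h2]
  set B : ℝ≥0∞ := ∫⁻ p in P₁, ENNReal.ofReal (Q₁ p - Q₀ p) with hBdef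
  have hAB : A = B := by rw [hswap, hpIoo, hpQ, hpP₁]
  have hTA : ∫⁻ t in T₀, ENNReal.ofReal (F₀ t - F₁ t) = A := hTres.symm
  -- integrability
  have hsm : AEStronglyMeasurable (fun t => F₀ t - F₁ t) (volume.restrict T₀) :=
    (hmF₀.sub hmF₁).aestronglyMeasurable
  have hint : IntegrableOn (fun t => F₀ t - F₁ t) T₀ volume := by
    refine ⟨hsm, ?_⟩
    rw [hasFiniteIntegral_iff_norm]
    have heq : ∫⁻ t in T₀, ENNReal.ofReal ‖F₀ t - F₁ t‖
        = ∫⁻ t in T₀, ENNReal.ofReal (F₀ t - F₁ t) := by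
      refine setLIntegral_congr_fun_ae hT₀m (ae_of_all _ fun t ht => ?_)
      rw [Real.norm_eq_abs, abs_of_nonneg (sub_nonneg.2 (le_of_lt ht))]
    rw [heq, hTA]
    exact hAfin
  have hnnae : 0 ≤ᵐ[volume.restrict T₀] fun t => F₀ t - F₁ t :=
    (ae_restrict_iff' hT₀m).2 (ae_of_all _ fun t ht => sub_nonneg.2 (le_of_lt ht))
  have hI₁ : ∫ t in T₀, (F₀ t - F₁ t) = A.toReal := by
    rw [integral_eq_lintegral_of_nonneg_ae hnnae hsm, hTA]
  have hsmp : AEStronglyMeasurable (fun p => Q₁ p - Q₀ p) (volume.restrict P₁) := by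
    refine (((hmQ₁.sub hmQ₀)).aestronglyMeasurable).congr ?_
    refine (ae_restrict_iff' hP₁m).2 (ae_of_all _ fun p hp => ?_)
    show (Ioo (0:ℝ) 1).indicator Q₁ p - (Ioo (0:ℝ) 1).indicator Q₀ p = Q₁ p - Q₀ p
    rw [indicator_of_mem hp.1, indicator_of_mem hp.1]
  have hnnp : 0 ≤ᵐ[volume.restrict P₁] fun p => Q₁ p - Q₀ p :=
    (ae_restrict_iff' hP₁m).2 (ae_of_all _ fun p hp => sub_nonneg.2 (le_of_lt hp.2))
  have hI₂ : ∫ p in P₁, (Q₁ p - Q₀ p) = B.toReal := by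
    rw [integral_eq_lintegral_of_nonneg_ae hnnp hsmp, hBdef]
  refine ⟨hint, ?_, ?_⟩
  · rw [hI₁]; exact ENNReal.toReal_nonneg
  · rw [hI₁, hI₂, hAB]
end

section
/- Let μ₁, μ₂ be Borel probability measures on ℝ with finite first moments, with CDFs F₁, F₂ and quantile functions F₁^{[-1]}, F₂^{[-1]}. Then ∫₀¹ |F₁^{[-1]}(p) - F₂^{[-1]}(p)| dp = ∫_ℝ |F₁(t) - F₂(t)| dt, and both integrals are finite. -/
open MeasureTheory Set
open Filter ProbabilityTheory symmDiff ENNReal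

lemma vol_symmDiff_Ici (a b : ℝ) : volume (Ici a ∆ Ici b) = ENNReal.ofReal |a - b| := by
  wlog hab : a ≤ b generalizing a b
  · rw [symmDiff_comm, abs_sub_comm]; exact this b a (le_of_not_ge hab)
  rw [Set.symmDiff_def, Set.Ici_diff_Ici, Set.Ici_diff_Ici,
    Set.Ico_eq_empty (not_lt.mpr hab), Set.union_empty, Real.volume_Ico,
    abs_of_nonpos (by linarith), neg_sub]

lemma vol_symmDiff_Iic {a b : ℝ} (ha0 : 0 ≤ a) (ha1 : a ≤ 1) (hb0 : 0 ≤ b) (hb1 : b ≤ 1) :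
    volume (Ioo (0:ℝ) 1 ∩ (Iic a ∆ Iic b)) = ENNReal.ofReal |a - b| := by
  wlog hab : a ≤ b generalizing a b
  · rw [symmDiff_comm, abs_sub_comm]; exact this hb0 hb1 ha0 ha1 (le_of_not_ge hab)
  rw [Set.symmDiff_def, Set.Iic_sdiff_Iic, Set.Iic_sdiff_Iic,
    Set.Ioc_eq_empty (not_lt.mpr hab), Set.empty_union]
  refine le_antisymm (le_trans (measure_mono inter_subset_right) ?_) ?_
  · rw [Real.volume_Ioc, abs_of_nonpos (by linarith), neg_sub]
  · rw [abs_of_nonpos (by linarith), neg_sub, ← Real.volume_Ioo]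
    refine measure_mono fun x hx => ?_
    exact ⟨⟨lt_of_le_of_lt ha0 hx.1, lt_of_lt_of_le hx.2 hb1⟩, hx.1, hx.2.le⟩

lemma cdf_set_nonempty (μ : Measure ℝ) {p : ℝ} (hp : p < 1) :
    {x : ℝ | p ≤ cdf μ x}.Nonempty := by
  obtain ⟨x, hx⟩ := ((tendsto_cdf_atTop μ).eventually_const_lt hp).exists
  exact ⟨x, hx.le⟩

lemma cdf_set_bddBelow (μ : Measure ℝ) {p : ℝ} (hp : 0 < p) :
    BddBelow {x : ℝ | p ≤ cdf μ x} := by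
  obtain ⟨x₀, hx₀⟩ := (eventually_atBot.mp ((tendsto_cdf_atBot μ).eventually_lt_const hp))
  exact ⟨x₀, fun y hy => le_of_not_gt fun h => absurd hy (not_le.mpr (hx₀ y h.le))⟩

lemma cdf_galois (μ : Measure ℝ) {p : ℝ} (hp : p ∈ Set.Ioo (0:ℝ) 1) (t : ℝ) :
    sInf {x : ℝ | p ≤ cdf μ x} ≤ t ↔ p ≤ cdf μ t := by
  constructor
  · intro h
    have hall : ∀ s ∈ Set.Ioi t, p ≤ cdf μ s := by
      intro s hs
      obtain ⟨x, hx, hxs⟩ := (csInf_lt_iff (cdf_set_bddBelow μ hp.1)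
        (cdf_set_nonempty μ hp.2)).mp (lt_of_le_of_lt h hs)
      exact hx.trans (monotone_cdf μ hxs.le)
    refine ge_of_tendsto (((cdf μ).right_continuous t).mono_left
      (nhdsWithin_mono t Set.Ioi_subset_Ici_self)) ?_
    exact eventually_nhdsWithin_of_forall hall
  · exact fun h => csInf_le (cdf_set_bddBelow μ hp.1) h

lemma meas_Iic_measurable (μ : Measure ℝ) : Measurable fun t => μ (Iic t) :=
  Monotone.measurable fun _ _ h => measure_mono (Iic_subset_Iic.mpr h)

lemma meas_Ioi_measurable (μ : Measure ℝ) : Measurable fun t => μ (Ioi t) :=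
  Antitone.measurable fun _ _ h => measure_mono (Ioi_subset_Ioi h)

lemma lint_left (μ : Measure ℝ) [IsProbabilityMeasure μ] (h : Integrable id μ) :
    ∫⁻ t in Iio (0:ℝ), μ (Iic t) < ⊤ := by
  have hU : MeasurableSet {q : ℝ × ℝ | q.2 ≤ q.1} :=
    measurableSet_le measurable_snd measurable_fst
  have h1 : ((volume.restrict (Iio (0:ℝ))).prod μ) {q : ℝ × ℝ | q.2 ≤ q.1}
      = ∫⁻ t in Iio (0:ℝ), μ (Iic t) := by
    rw [Measure.prod_apply hU]
    congr 1
  have h2 : ((volume.restrict (Iio (0:ℝ))).prod μ) {q : ℝ × ℝ | q.2 ≤ q.1}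
      = ∫⁻ x, ENNReal.ofReal (-x) ∂μ := by
    rw [Measure.prod_apply_symm hU]
    refine lintegral_congr fun x => ?_
    have : (fun t => (t, x)) ⁻¹' {q : ℝ × ℝ | q.2 ≤ q.1} = Ici x := rfl
    rw [this, Measure.restrict_apply measurableSet_Ici, Set.Ici_inter_Iio,
      Real.volume_Ico]
    norm_num
  rw [← h1, h2]
  calc ∫⁻ x, ENNReal.ofReal (-x) ∂μ ≤ ∫⁻ x, (‖x‖₊ : ℝ≥0∞) ∂μ := by
        refine lintegral_mono fun x => ?_
        rw [← enorm_eq_nnnorm, Real.enorm_eq_ofReal_abs]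
        exact ENNReal.ofReal_le_ofReal (neg_le_abs x)
    _ < ⊤ := h.hasFiniteIntegral

lemma lint_right (μ : Measure ℝ) [IsProbabilityMeasure μ] (h : Integrable id μ) :
    ∫⁻ t in Ici (0:ℝ), μ (Ioi t) < ⊤ := by
  have hU : MeasurableSet {q : ℝ × ℝ | q.1 < q.2} :=
    measurableSet_lt measurable_fst measurable_snd
  have h1 : ((volume.restrict (Ici (0:ℝ))).prod μ) {q : ℝ × ℝ | q.1 < q.2}
      = ∫⁻ t in Ici (0:ℝ), μ (Ioi t) := by
    rw [Measure.prod_apply hU]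
    congr 1
  have h2 : ((volume.restrict (Ici (0:ℝ))).prod μ) {q : ℝ × ℝ | q.1 < q.2}
      = ∫⁻ x, ENNReal.ofReal x ∂μ := by
    rw [Measure.prod_apply_symm hU]
    refine lintegral_congr fun x => ?_
    have : (fun t => (t, x)) ⁻¹' {q : ℝ × ℝ | q.1 < q.2} = Iio x := rfl
    rw [this, Measure.restrict_apply measurableSet_Iio, Set.Iio_inter_Ici,
      Real.volume_Ico]
    norm_num
  rw [← h1, h2]
  calc ∫⁻ x, ENNReal.ofReal x ∂μ ≤ ∫⁻ x, (‖x‖₊ : ℝ≥0∞) ∂μ := by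
        refine lintegral_mono fun x => ?_
        rw [← enorm_eq_nnnorm, Real.enorm_eq_ofReal_abs]
        exact ENNReal.ofReal_le_ofReal (le_abs_self x)
    _ < ⊤ := h.hasFiniteIntegral

lemma ofReal_one_sub_cdf (μ : Measure ℝ) [IsProbabilityMeasure μ] (t : ℝ) :
    ENNReal.ofReal (1 - cdf μ t) = μ (Ioi t) := by
  have hc := measure_compl (μ := μ) (measurableSet_Iic (a := t)) (measure_ne_top μ _)
  rw [compl_Iic, measure_univ] at hc
  rw [ENNReal.ofReal_sub _ (cdf_nonneg μ t), ENNReal.ofReal_one, ofReal_cdf, hc]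

lemma lint_F_lt_top (μ₁ μ₂ : Measure ℝ) [IsProbabilityMeasure μ₁] [IsProbabilityMeasure μ₂]
    (h₁ : Integrable id μ₁) (h₂ : Integrable id μ₂) :
    ∫⁻ t, ENNReal.ofReal |cdf μ₁ t - cdf μ₂ t| < ⊤ := by
  rw [← lintegral_add_compl _ (measurableSet_Iio (a := (0:ℝ))), compl_Iio]
  refine ENNReal.add_lt_top.mpr ⟨?_, ?_⟩
  · calc ∫⁻ t in Iio (0:ℝ), ENNReal.ofReal |cdf μ₁ t - cdf μ₂ t|
        ≤ ∫⁻ t in Iio (0:ℝ), (μ₁ (Iic t) + μ₂ (Iic t)) := by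
          refine lintegral_mono fun t => ?_
          rw [← ofReal_cdf, ← ofReal_cdf, ← ENNReal.ofReal_add (cdf_nonneg _ _) (cdf_nonneg _ _)]
          exact ENNReal.ofReal_le_ofReal
            (abs_sub_le_iff.mpr ⟨by linarith [cdf_nonneg μ₂ t], by linarith [cdf_nonneg μ₁ t]⟩)
      _ < ⊤ := by
          rw [lintegral_add_left ((meas_Iic_measurable μ₁))]
          exact ENNReal.add_lt_top.mpr ⟨lint_left μ₁ h₁, lint_left μ₂ h₂⟩
  · calc ∫⁻ t in Ici (0:ℝ), ENNReal.ofReal |cdf μ₁ t - cdf μ₂ t|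
        ≤ ∫⁻ t in Ici (0:ℝ), (μ₁ (Ioi t) + μ₂ (Ioi t)) := by
          refine lintegral_mono fun t => ?_
          rw [← ofReal_one_sub_cdf, ← ofReal_one_sub_cdf,
            ← ENNReal.ofReal_add (by linarith [cdf_le_one μ₁ t]) (by linarith [cdf_le_one μ₂ t])]
          exact ENNReal.ofReal_le_ofReal
            (abs_sub_le_iff.mpr ⟨by linarith [cdf_le_one μ₁ t, cdf_le_one μ₂ t],
              by linarith [cdf_le_one μ₁ t, cdf_le_one μ₂ t]⟩)
      _ < ⊤ := by
          rw [lintegral_add_left ((meas_Ioi_measurable μ₁))]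
          exact ENNReal.add_lt_top.mpr ⟨lint_right μ₁ h₁, lint_right μ₂ h₂⟩

lemma key_lintegral (μ₁ μ₂ : Measure ℝ) [IsProbabilityMeasure μ₁] [IsProbabilityMeasure μ₂] :
    ∫⁻ p in Ioo (0:ℝ) 1,
        ENNReal.ofReal |sInf {x : ℝ | p ≤ cdf μ₁ x} - sInf {x : ℝ | p ≤ cdf μ₂ x}|
      = ∫⁻ t, ENNReal.ofReal |cdf μ₁ t - cdf μ₂ t| := by
  set S₁ : Set (ℝ × ℝ) := {q | q.1 ∈ Ioo (0:ℝ) 1 ∧ q.1 ≤ cdf μ₁ q.2} with hS₁def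
  set S₂ : Set (ℝ × ℝ) := {q | q.1 ∈ Ioo (0:ℝ) 1 ∧ q.1 ≤ cdf μ₂ q.2} with hS₂def
  have hS₁ : MeasurableSet S₁ :=
    (measurableSet_Ioo.preimage measurable_fst).inter
      (measurableSet_le measurable_fst ((monotone_cdf μ₁).measurable.comp measurable_snd))
  have hS₂ : MeasurableSet S₂ :=
    (measurableSet_Ioo.preimage measurable_fst).inter
      (measurableSet_le measurable_fst ((monotone_cdf μ₂).measurable.comp measurable_snd))
  have hT : MeasurableSet (S₁ ∆ S₂) := hS₁.symmDiff hS₂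
  have left : (volume.prod volume) (S₁ ∆ S₂)
      = ∫⁻ p in Ioo (0:ℝ) 1,
          ENNReal.ofReal |sInf {x : ℝ | p ≤ cdf μ₁ x} - sInf {x : ℝ | p ≤ cdf μ₂ x}| := by
    rw [Measure.prod_apply hT]
    rw [← lintegral_indicator measurableSet_Ioo]
    refine lintegral_congr fun p => ?_
    by_cases hp : p ∈ Ioo (0:ℝ) 1
    · have e1 : Prod.mk p ⁻¹' S₁ = Ici (sInf {x : ℝ | p ≤ cdf μ₁ x}) := by
        ext t
        simp only [hS₁def, mem_preimage, mem_setOf_eq, mem_Ici, hp, true_and]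
        exact (cdf_galois μ₁ hp t).symm
      have e2 : Prod.mk p ⁻¹' S₂ = Ici (sInf {x : ℝ | p ≤ cdf μ₂ x}) := by
        ext t
        simp only [hS₂def, mem_preimage, mem_setOf_eq, mem_Ici, hp, true_and]
        exact (cdf_galois μ₂ hp t).symm
      rw [Set.preimage_symmDiff, e1, e2, vol_symmDiff_Ici, Set.indicator_of_mem hp]
    · have e1 : Prod.mk p ⁻¹' S₁ = ∅ := by
        ext t
        simp only [hS₁def, mem_preimage, mem_setOf_eq, mem_empty_iff_false, iff_false, not_and]
        exact fun h => absurd h hp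
      have e2 : Prod.mk p ⁻¹' S₂ = ∅ := by
        ext t
        simp only [hS₂def, mem_preimage, mem_setOf_eq, mem_empty_iff_false, iff_false, not_and]
        exact fun h => absurd h hp
      rw [Set.preimage_symmDiff, e1, e2, symmDiff_self, Set.indicator_of_notMem hp]
      simp
  have right : (volume.prod volume) (S₁ ∆ S₂) = ∫⁻ t, ENNReal.ofReal |cdf μ₁ t - cdf μ₂ t| := by
    rw [Measure.prod_apply_symm hT]
    refine lintegral_congr fun t => ?_
    have e1 : (fun p => (p, t)) ⁻¹' S₁ = Ioo (0:ℝ) 1 ∩ Iic (cdf μ₁ t) := rfl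
    have e2 : (fun p => (p, t)) ⁻¹' S₂ = Ioo (0:ℝ) 1 ∩ Iic (cdf μ₂ t) := rfl
    rw [Set.preimage_symmDiff, e1, e2, ← Set.inter_symmDiff_distrib_left]
    exact vol_symmDiff_Iic (cdf_nonneg μ₁ t) (cdf_le_one μ₁ t) (cdf_nonneg μ₂ t) (cdf_le_one μ₂ t)
  rw [← left, right]

theorem quantile_cdf_integral_eq
    (μ₁ μ₂ : Measure ℝ) [IsProbabilityMeasure μ₁] [IsProbabilityMeasure μ₂]
    (h₁ : Integrable id μ₁) (h₂ : Integrable id μ₂)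
    (F₁ F₂ : ℝ → ℝ)
    (hF₁ : ∀ t, F₁ t = (μ₁ (Iic t)).toReal)
    (hF₂ : ∀ t, F₂ t = (μ₂ (Iic t)).toReal)
    (Q₁ Q₂ : ℝ → ℝ)
    (hQ₁ : ∀ p, Q₁ p = sInf {x : ℝ | p ≤ F₁ x})
    (hQ₂ : ∀ p, Q₂ p = sInf {x : ℝ | p ≤ F₂ x}) :
    IntegrableOn (fun p => |Q₁ p - Q₂ p|) (Ioo (0:ℝ) 1) volume ∧
    Integrable (fun t => |F₁ t - F₂ t|) volume ∧
    (∫ p in Ioo (0:ℝ) 1, |Q₁ p - Q₂ p|) = ∫ t, |F₁ t - F₂ t| := by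
  have hF₁' : F₁ = ⇑(cdf μ₁) := funext fun t => by rw [hF₁ t, cdf_eq_real, measureReal_def]
  have hF₂' : F₂ = ⇑(cdf μ₂) := funext fun t => by rw [hF₂ t, cdf_eq_real, measureReal_def]
  subst hF₁' hF₂'
  have hQ₁' : Q₁ = fun p => sInf {x : ℝ | p ≤ cdf μ₁ x} := funext hQ₁
  have hQ₂' : Q₂ = fun p => sInf {x : ℝ | p ≤ cdf μ₂ x} := funext hQ₂
  subst hQ₁' hQ₂'
  have key := key_lintegral μ₁ μ₂
  have fin := lint_F_lt_top μ₁ μ₂ h₁ h₂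
  have hmF : Measurable fun t => |cdf μ₁ t - cdf μ₂ t| :=
    ((monotone_cdf μ₁).measurable.sub (monotone_cdf μ₂).measurable).abs
  have haeQ : AEMeasurable
      (fun p => |sInf {x : ℝ | p ≤ cdf μ₁ x} - sInf {x : ℝ | p ≤ cdf μ₂ x}|)
      (volume.restrict (Ioo (0:ℝ) 1)) := by
    have m1 : MonotoneOn (fun p => sInf {x : ℝ | p ≤ cdf μ₁ x}) (Ioo (0:ℝ) 1) :=
      fun p hp q hq hpq => csInf_le_csInf (cdf_set_bddBelow μ₁ hp.1)
        (cdf_set_nonempty μ₁ hq.2) fun x hx => le_trans hpq hx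
    have m2 : MonotoneOn (fun p => sInf {x : ℝ | p ≤ cdf μ₂ x}) (Ioo (0:ℝ) 1) :=
      fun p hp q hq hpq => csInf_le_csInf (cdf_set_bddBelow μ₂ hp.1)
        (cdf_set_nonempty μ₂ hq.2) fun x hx => le_trans hpq hx
    exact (measurable_id.abs).comp_aemeasurable
      ((aemeasurable_restrict_of_monotoneOn measurableSet_Ioo m1).sub
        (aemeasurable_restrict_of_monotoneOn measurableSet_Ioo m2))
  have hfiF : HasFiniteIntegral (fun t => |cdf μ₁ t - cdf μ₂ t|) volume := by
    rw [hasFiniteIntegral_iff_norm]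
    simpa only [Real.norm_eq_abs, abs_abs] using fin
  have hfiQ : HasFiniteIntegral
      (fun p => |sInf {x : ℝ | p ≤ cdf μ₁ x} - sInf {x : ℝ | p ≤ cdf μ₂ x}|)
      (volume.restrict (Ioo (0:ℝ) 1)) := by
    rw [hasFiniteIntegral_iff_norm]
    simp only [Real.norm_eq_abs, abs_abs]
    rw [key]
    exact fin
  refine ⟨⟨haeQ.aestronglyMeasurable, hfiQ⟩, ⟨hmF.aestronglyMeasurable, hfiF⟩, ?_⟩
  rw [integral_eq_lintegral_of_nonneg_ae (Eventually.of_forall fun p => abs_nonneg _)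
      haeQ.aestronglyMeasurable,
    integral_eq_lintegral_of_nonneg_ae (Eventually.of_forall fun t => abs_nonneg _)
      hmF.aestronglyMeasurable, key]
end

section
/- Let μ₁, μ₂ be Borel probability measures on ℝ with finite q-th moments, q ∈ [1,∞), and let π* be the monotone coupling given by the pushforward of Lebesgue measure on [0,1] by the pair of quantile functions. Define the leftward and rightward transport efforts T^← = ∫_{{x₂ < x₁}} |x₁-x₂|^q dπ* and T^→ = ∫_{{x₂ > x₁}} |x₁-x₂|^q dπ*. Then the q-Wasserstein distance satisfies W_q(μ₁, μ₂) = (T^← + T^→)^{1/q}. -/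
open MeasureTheory Set

noncomputable def transportCost (q : ℝ) (π : Measure (ℝ × ℝ)) : ENNReal :=
  ∫⁻ x, ENNReal.ofReal (|x.1 - x.2| ^ q) ∂π

/-- The `q`-Wasserstein distance on `ℝ` (cost `|x₁-x₂|^q`), as an infimum over couplings. -/
noncomputable def wassersteinDist (q : ℝ) (μ ν : Measure ℝ) : ENNReal :=
  (⨅ (π : Measure (ℝ × ℝ)) (_ : π.map Prod.fst = μ ∧ π.map Prod.snd = ν),
    transportCost q π) ^ (1 / q)

namespace WassersteinAux

open Filter Topology ProbabilityTheory
open scoped ENNReal NNReal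

/-! ### The Stieltjes measure `ρ` representing `|z|^q` -/

/-- The Stieltjes function `t ↦ q t^(q-1)` on `[0,∞)`, `0` on `(-∞,0)`. -/
noncomputable def G (q : ℝ) (hq : 1 ≤ q) : StieltjesFunction ℝ where
  toFun t := if 0 ≤ t then q * t ^ (q - 1) else 0
  mono' := by
    intro a b hab
    dsimp only
    rcases le_or_gt 0 a with ha | ha
    · rw [if_pos ha, if_pos (ha.trans hab)]
      have := Real.rpow_le_rpow ha hab (by linarith : (0:ℝ) ≤ q - 1)
      nlinarith [this]
    · rw [if_neg (not_le.mpr ha)]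
      rcases le_or_gt 0 b with hb | hb
      · rw [if_pos hb]
        positivity
      · rw [if_neg (not_le.mpr hb)]
  right_continuous' := by
    intro x
    rcases lt_or_ge x 0 with hx | hx
    · have hev : ∀ᶠ y in 𝓝 x, (if 0 ≤ y then q * y ^ (q - 1) else 0) = 0 := by
        filter_upwards [Iio_mem_nhds hx] with y hy
        rw [if_neg (not_le.mpr hy)]
      exact ((continuousAt_const (y := (0:ℝ))).congr (Filter.EventuallyEq.symm hev)).continuousWithinAt
    · rcases eq_or_lt_of_le hq with h1 | h1
      · -- q = 1 : the function is the indicator of `[0,∞)` (value q there, since t^0 = 1)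
        have : ∀ y ∈ Ici x, (if 0 ≤ y then q * y ^ (q - 1) else 0) = q := by
          intro y hy
          rw [if_pos (hx.trans hy), ← h1]
          norm_num
        exact (continuousWithinAt_const (b := q)).congr this (this x (le_refl x))
      · have hc : ContinuousAt (fun y : ℝ => q * y ^ (q - 1)) x := by
          exact continuousAt_const.mul (Real.continuousAt_rpow_const x (q-1)
            (Or.inr (by linarith)))
        refine hc.continuousWithinAt.congr (fun y hy => ?_) (by rw [if_pos hx])
        rw [if_pos (hx.trans hy)]

lemma G_apply (q : ℝ) (hq : 1 ≤ q) (t : ℝ) :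
    G q hq t = if 0 ≤ t then q * t ^ (q - 1) else 0 := rfl

lemma G_tendsto_atBot (q : ℝ) (hq : 1 ≤ q) : Tendsto (G q hq) atBot (𝓝 0) := by
  apply Tendsto.congr' (f₁ := fun _ => (0:ℝ))
  · filter_upwards [Iio_mem_atBot (0:ℝ)] with y hy
    rw [G_apply, if_neg (not_le.mpr hy)]
  · exact tendsto_const_nhds

lemma G_measure_Iic (q : ℝ) (hq : 1 ≤ q) (x : ℝ) :
    (G q hq).measure (Iic x) = ENNReal.ofReal (G q hq x) := by
  rw [StieltjesFunction.measure_Iic _ (G_tendsto_atBot q hq), sub_zero]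

lemma G_measure_Iio_zero (q : ℝ) (hq : 1 ≤ q) : (G q hq).measure (Iio 0) = 0 := by
  have : Iio (0:ℝ) = ⋃ n : ℕ, Iic (-(1:ℝ)/(n+1)) := by
    ext y
    simp only [mem_Iio, mem_iUnion, mem_Iic]
    constructor
    · intro hy
      obtain ⟨n, hn⟩ := exists_nat_one_div_lt (show (0:ℝ) < -y by linarith)
      exact ⟨n, by rw [neg_div]; linarith⟩
    · rintro ⟨n, hn⟩
      have : -(1:ℝ)/(n+1) < 0 := by
        rw [neg_div]
        simp only [neg_neg, neg_lt, neg_zero]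
        positivity
      linarith
  rw [this]
  refine measure_iUnion_null fun n => ?_
  rw [G_measure_Iic, G_apply, if_neg, ENNReal.ofReal_zero]
  rw [not_le, neg_div]
  simp only [neg_neg, neg_lt, neg_zero]
  positivity

/-- Core computation: for `0 ≤ z`, `∫ (z-t)₊ dρ(t) = z^q`. -/
lemma lintegral_G_ofReal_sub (q : ℝ) (hq : 1 ≤ q) {z : ℝ} (hz : 0 ≤ z) :
    ∫⁻ t, ENNReal.ofReal (z - t) ∂(G q hq).measure = ENNReal.ofReal (z ^ q) := by
  have hq0 : (0:ℝ) < q := by linarith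
  set ρ := (G q hq).measure with hρ
  have hS : MeasurableSet {w : ℝ × ℝ | w.1 ≤ w.2 ∧ w.2 < z} :=
    (measurableSet_le measurable_fst measurable_snd).inter
      (measurableSet_lt measurable_snd measurable_const)
  have step1 : ∫⁻ t, ENNReal.ofReal (z - t) ∂ρ
      = ∫⁻ s in Iio z, ENNReal.ofReal (G q hq s) ∂volume := by
    have h1 : ∀ t : ℝ, ENNReal.ofReal (z - t)
        = ∫⁻ s, {w : ℝ × ℝ | w.1 ≤ w.2 ∧ w.2 < z}.indicator 1 (t, s) ∂volume := by
      intro t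
      have heq : (fun s => ({w : ℝ × ℝ | w.1 ≤ w.2 ∧ w.2 < z}.indicator 1 (t, s) : ℝ≥0∞))
          = (Ico t z).indicator 1 := by
        funext s; by_cases h : t ≤ s ∧ s < z <;>
          simp [Set.indicator_apply, Set.mem_Ico, h]
      rw [heq, lintegral_indicator_one measurableSet_Ico, Real.volume_Ico]
    calc ∫⁻ t, ENNReal.ofReal (z - t) ∂ρ
        = ∫⁻ t, (∫⁻ s, {w : ℝ × ℝ | w.1 ≤ w.2 ∧ w.2 < z}.indicator 1 (t, s) ∂volume) ∂ρ := by
          simp_rw [← h1]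
      _ = ∫⁻ s, (∫⁻ t, {w : ℝ × ℝ | w.1 ≤ w.2 ∧ w.2 < z}.indicator 1 (t, s) ∂ρ) ∂volume := by
          exact lintegral_lintegral_swap ((measurable_one.indicator hS)).aemeasurable
      _ = ∫⁻ s, (Iio z).indicator (fun s => ρ (Iic s)) s ∂volume := by
          refine lintegral_congr fun s => ?_
          by_cases hsz : s < z
          · have heq : (fun t => ({w : ℝ × ℝ | w.1 ≤ w.2 ∧ w.2 < z}.indicator 1 (t, s) : ℝ≥0∞))
                = (Iic s).indicator 1 := by
              funext t; by_cases h : t ≤ s <;>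
                simp [Set.indicator_apply, h, hsz]
            rw [heq, lintegral_indicator_one measurableSet_Iic,
              Set.indicator_of_mem (mem_Iio.mpr hsz)]
          · have heq : (fun t => ({w : ℝ × ℝ | w.1 ≤ w.2 ∧ w.2 < z}.indicator 1 (t, s) : ℝ≥0∞))
                = fun _ => 0 := by
              funext t; simp [Set.indicator_apply, hsz]
            rw [heq, lintegral_zero, Set.indicator_of_notMem (by simpa using hsz)]
      _ = ∫⁻ s in Iio z, ρ (Iic s) ∂volume := by
          rw [← lintegral_indicator measurableSet_Iio]
      _ = ∫⁻ s in Iio z, ENNReal.ofReal (G q hq s) ∂volume := by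
          refine setLIntegral_congr_fun_ae measurableSet_Iio (ae_of_all _ fun s _ => ?_)
          rw [hρ, G_measure_Iic]
  rw [step1]
  rcases eq_or_lt_of_le hz with hz0 | hz0
  · rw [← hz0]
    have : ∫⁻ s in Iio (0:ℝ), ENNReal.ofReal (G q hq s) ∂volume = 0 := by
      rw [lintegral_eq_zero_iff'
        ((G q hq).mono.measurable.ennreal_ofReal).aemeasurable]
      refine (ae_restrict_iff' measurableSet_Iio).mpr (ae_of_all _ fun s hs => ?_)
      simp [G_apply, not_le.mpr (mem_Iio.mp hs)]
    rw [this, Real.zero_rpow hq0.ne', ENNReal.ofReal_zero]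
  · -- z > 0
    have hsplit : Iio z = Iic 0 ∪ Ioo 0 z := by
      ext s
      simp only [mem_Iio, mem_union, mem_Iic, mem_Ioo]
      constructor
      · intro h; rcases le_or_gt s 0 with h0 | h0
        · exact Or.inl h0
        · exact Or.inr ⟨h0, h⟩
      · rintro (h | ⟨_, h⟩) <;> [linarith; exact h]
    have hdisj : Disjoint (Iic (0:ℝ)) (Ioo 0 z) := by
      apply Set.disjoint_left.mpr
      rintro s hs ⟨h1, _⟩
      exact absurd h1 (not_lt.mpr hs)
    rw [hsplit, lintegral_union measurableSet_Ioo hdisj]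
    have hIic : ∫⁻ s in Iic (0:ℝ), ENNReal.ofReal (G q hq s) ∂volume = 0 := by
      have : (Iic (0:ℝ) : Set ℝ) =ᵐ[volume] (Iio (0:ℝ) : Set ℝ) := Iio_ae_eq_Iic.symm
      rw [setLIntegral_congr this, lintegral_eq_zero_iff'
        ((G q hq).mono.measurable.ennreal_ofReal).aemeasurable]
      refine (ae_restrict_iff' measurableSet_Iio).mpr (ae_of_all _ fun s hs => ?_)
      simp [G_apply, not_le.mpr (mem_Iio.mp hs)]
    rw [hIic, zero_add]
    have hcong : ∫⁻ s in Ioo (0:ℝ) z, ENNReal.ofReal (G q hq s) ∂volume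
        = ∫⁻ s in Ioo (0:ℝ) z, ENNReal.ofReal (q * s ^ (q-1)) ∂volume := by
      refine setLIntegral_congr_fun_ae measurableSet_Ioo (ae_of_all _ fun s hs => ?_)
      rw [G_apply, if_pos hs.1.le]
    rw [hcong]
    have hii : IntervalIntegrable (fun s : ℝ => q * s ^ (q-1)) volume 0 z := by
      exact (intervalIntegral.intervalIntegrable_rpow (Or.inl (by linarith))).const_mul q
    have hInt : IntegrableOn (fun s : ℝ => q * s ^ (q-1)) (Ioo 0 z) volume := by
      have := (intervalIntegrable_iff_integrableOn_Ioc_of_le hz).mp hii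
      exact this.mono_set Ioo_subset_Ioc_self
    rw [← ofReal_integral_eq_lintegral_ofReal hInt ?nn]
    case nn =>
      refine (ae_restrict_iff' measurableSet_Ioo).mpr (ae_of_all _ fun s hs => ?_)
      have : (0:ℝ) ≤ s ^ (q-1) := Real.rpow_nonneg hs.1.le _
      positivity
    congr 1
    have : ∫ s in Ioo (0:ℝ) z, q * s ^ (q-1) ∂volume
        = ∫ s in (0:ℝ)..z, q * s ^ (q-1) ∂volume := by
      rw [intervalIntegral.integral_of_le hz, MeasureTheory.integral_Ioc_eq_integral_Ioo]
    rw [this, intervalIntegral.integral_const_mul, integral_rpow (Or.inl (by linarith))]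
    rw [sub_add_cancel, Real.zero_rpow hq0.ne', sub_zero]
    field_simp

lemma lintegral_G_pair (q : ℝ) (hq : 1 ≤ q) {z : ℝ} (hz : 0 ≤ z) :
    ∫⁻ t, (ENNReal.ofReal (z - t) + ENNReal.ofReal (-z - t)) ∂(G q hq).measure
      = ENNReal.ofReal (z ^ q) := by
  have hmeas : Measurable fun t : ℝ => ENNReal.ofReal (z - t) := by fun_prop
  rw [lintegral_add_left hmeas]
  have hneg : ∫⁻ t, ENNReal.ofReal (-z - t) ∂(G q hq).measure = 0 := by
    rw [lintegral_eq_zero_iff (show Measurable fun t : ℝ => ENNReal.ofReal (-z - t) by fun_prop)]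
    have hae : ∀ᵐ t ∂(G q hq).measure, t ∉ Iio (0:ℝ) :=
      (ae_iff.mpr (by simp only [not_not]; exact G_measure_Iio_zero q hq))
    filter_upwards [hae] with t ht
    simp only [mem_Iio, not_lt] at ht
    simp only [Pi.zero_apply, ENNReal.ofReal_eq_zero]
    linarith
  rw [hneg, add_zero, lintegral_G_ofReal_sub q hq hz]

/-- The key pointwise identity `|x-y|^q = ∫ ((x-y-t)₊ + (y-x-t)₊) dρ(t)`. -/
lemma key_pointwise (q : ℝ) (hq : 1 ≤ q) (x y : ℝ) :
    ENNReal.ofReal (|x - y| ^ q)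
      = ∫⁻ t, (ENNReal.ofReal (x - y - t) + ENNReal.ofReal (y - x - t))
          ∂(G q hq).measure := by
  rcases le_total y x with h | h
  · have := lintegral_G_pair q hq (sub_nonneg.mpr h)
    rw [abs_of_nonneg (sub_nonneg.mpr h)]
    rw [← this]
    congr 1 with t
    congr 2
    ring
  · have := lintegral_G_pair q hq (sub_nonneg.mpr h)
    rw [abs_of_nonpos (sub_nonpos.mpr h), neg_sub]
    rw [← this]
    congr 1 with t
    rw [add_comm]
    congr 2
    ring

/-! ### Quantile function facts -/

section Quantile

variable (μ : Measure ℝ) [IsProbabilityMeasure μ] (F Q : ℝ → ℝ)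

lemma F_eq_cdf (hF : ∀ t, F t = (μ (Iic t)).toReal) : ∀ t, F t = cdf μ t :=
  fun t => by rw [hF, cdf_eq_real, measureReal_def]

lemma quantile_le_iff (hF : ∀ t, F t = (μ (Iic t)).toReal)
    (hQ : ∀ p, Q p = sInf {x : ℝ | p ≤ F x})
    {p : ℝ} (hp0 : 0 < p) (hp1 : p < 1) (x : ℝ) :
    Q p ≤ x ↔ p ≤ F x := by
  have hFc := F_eq_cdf μ F hF
  have hmono : Monotone F := by
    intro a b hab
    rw [hFc, hFc]
    exact monotone_cdf μ hab
  set S := {x : ℝ | p ≤ F x} with hS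
  have hne : S.Nonempty := by
    obtain ⟨x, hx⟩ := (Filter.Tendsto.eventually_const_le hp1 (tendsto_cdf_atTop μ)).exists
    exact ⟨x, by rwa [hS, mem_setOf_eq, hFc]⟩
  have hbdd : BddBelow S := by
    obtain ⟨a, ha⟩ := Filter.eventually_atBot.mp
      (Filter.Tendsto.eventually_lt_const hp0 (tendsto_cdf_atBot μ))
    refine ⟨a, fun x hx => ?_⟩
    by_contra hax
    have h1 : F x < p := by rw [hFc]; exact ha x (le_of_not_ge hax)
    exact absurd hx (by simpa [hS] using not_le.mpr h1)
  have hmem : p ≤ F (Q p) := by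
    rw [hFc]
    have h1 : ∀ y, Q p < y → p ≤ cdf μ y := by
      intro y hy
      rw [hQ] at hy
      obtain ⟨s, hsS, hs⟩ := (csInf_lt_iff hbdd hne).mp hy
      have hps : p ≤ F s := hsS
      rw [hFc] at hps
      exact hps.trans (monotone_cdf μ hs.le)
    have h3 : Tendsto (cdf μ) (𝓝[>] (Q p)) (𝓝 (cdf μ (Q p))) :=
      ((cdf μ).right_continuous (Q p)).tendsto.mono_left
        (nhdsWithin_mono _ Ioi_subset_Ici_self)
    exact ge_of_tendsto h3 (eventually_nhdsWithin_of_forall fun y hy => h1 y hy)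
  constructor
  · intro hle
    exact hmem.trans (hmono hle)
  · intro hx
    rw [hQ]
    exact csInf_le hbdd hx

lemma aemeasurable_quantile (hF : ∀ t, F t = (μ (Iic t)).toReal)
    (hQ : ∀ p, Q p = sInf {x : ℝ | p ≤ F x}) :
    AEMeasurable Q (volume.restrict (Icc (0:ℝ) 1)) := by
  set Q' := fun p => if 0 < p ∧ p < 1 then Q p else 0 with hQ'
  have hQ'm : Measurable Q' := by
    apply measurable_of_Iic
    intro x
    have hpre : Q' ⁻¹' Iic x
        = (Ioo 0 1 ∩ Iic (F x)) ∪ (if (0:ℝ) ≤ x then (Ioo (0:ℝ) 1)ᶜ else ∅) := by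
      ext p
      by_cases hp : 0 < p ∧ p < 1
      · simp only [hQ', mem_preimage, mem_Iic, if_pos hp, mem_union, mem_inter_iff, mem_Ioo]
        rw [quantile_le_iff μ F Q hF hQ hp.1 hp.2]
        constructor
        · intro h; exact Or.inl ⟨hp, h⟩
        · rintro (⟨_, h⟩ | h)
          · exact h
          · exfalso
            split_ifs at h with h0
            · exact h (mem_Ioo.mpr hp)
            · exact h
      · simp only [hQ', mem_preimage, mem_Iic, if_neg hp, mem_union, mem_inter_iff, mem_Ioo]
        constructor
        · intro h
          refine Or.inr ?_
          rw [if_pos h]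
          exact fun hmem => hp (mem_Ioo.mp hmem)
        · rintro (⟨h1, _⟩ | h)
          · exact absurd h1 hp
          · split_ifs at h with h0
            · exact h0
            · exact absurd h (notMem_empty p)
    rw [hpre]
    refine (measurableSet_Ioo.inter measurableSet_Iic).union ?_
    split_ifs
    · exact measurableSet_Ioo.compl
    · exact MeasurableSet.empty
  have hae : Q =ᵐ[volume.restrict (Icc (0:ℝ) 1)] Q' := by
    have hnull : volume.restrict (Icc (0:ℝ) 1) {p : ℝ | ¬ (0 < p ∧ p < 1)} = 0 := by
      rw [Measure.restrict_apply' measurableSet_Icc]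
      refine measure_mono_null (fun p hp => ?_) (show volume ({0,1} : Set ℝ) = 0 from
        (Set.toFinite _).measure_zero _)
      obtain ⟨hnp, hpI⟩ := hp
      simp only [mem_setOf_eq, not_and_or, not_lt] at hnp
      simp only [mem_insert_iff, mem_singleton_iff]
      rcases hnp with h | h
      · exact Or.inl (le_antisymm h hpI.1)
      · exact Or.inr (le_antisymm hpI.2 h)
    rw [Filter.eventuallyEq_iff_exists_mem]
    refine ⟨{p | 0 < p ∧ p < 1}, ?_, fun p hp => (if_pos hp).symm⟩
    rw [mem_ae_iff]
    simpa [compl_setOf] using hnull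
  exact hQ'm.aemeasurable.congr hae.symm

lemma ofReal_F (hF : ∀ t, F t = (μ (Iic t)).toReal) (x : ℝ) :
    ENNReal.ofReal (F x) = μ (Iic x) := by
  rw [hF, ENNReal.ofReal_toReal (measure_ne_top μ _)]

lemma F_nonneg (hF : ∀ t, F t = (μ (Iic t)).toReal) (x : ℝ) : 0 ≤ F x := by
  rw [hF]; exact ENNReal.toReal_nonneg

lemma F_le_one (hF : ∀ t, F t = (μ (Iic t)).toReal) (x : ℝ) : F x ≤ 1 := by
  rw [F_eq_cdf μ F hF]; exact cdf_le_one μ x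

/-- The preimage set `{p ∈ [0,1] : Q p ≤ x}` has measure `F x`. -/
lemma volume_quantile_inter (hF : ∀ t, F t = (μ (Iic t)).toReal)
    (hQ : ∀ p, Q p = sInf {x : ℝ | p ≤ F x}) {c : ℝ} (hc0 : 0 ≤ c) (hc1 : c ≤ 1)
    (S : Set ℝ) (hS1 : ∀ p ∈ Ioo (0:ℝ) 1, p ∈ S ↔ p ≤ c)
    (hS2 : S ⊆ Icc 0 1) : volume S = ENNReal.ofReal c := by
  apply le_antisymm
  · calc volume S ≤ volume (Ioc 0 c ∪ {0, 1} : Set ℝ) := by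
          refine measure_mono fun p hp => ?_
          rcases eq_or_ne p 0 with h0 | h0
          · exact Or.inr (by simp [h0])
          rcases eq_or_ne p 1 with h1 | h1
          · exact Or.inr (by simp [h1])
          have hp0 : 0 < p := lt_of_le_of_ne (hS2 hp).1 (Ne.symm h0)
          have hp1 : p < 1 := lt_of_le_of_ne (hS2 hp).2 h1
          exact Or.inl ⟨hp0, (hS1 p ⟨hp0, hp1⟩).mp hp⟩
      _ ≤ volume (Ioc (0:ℝ) c) + volume ({0, 1} : Set ℝ) := measure_union_le _ _
      _ = ENNReal.ofReal c := by
          rw [(Set.toFinite ({0,1} : Set ℝ)).measure_zero volume, add_zero,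
            Real.volume_Ioc, sub_zero]
  · have hsub : Ioo 0 c ⊆ S := by
      intro p hp
      have hp1 : p < 1 := lt_of_lt_of_le hp.2 hc1
      exact (hS1 p ⟨hp.1, hp1⟩).mpr hp.2.le
    calc ENNReal.ofReal c = volume (Ioo 0 c) := by rw [Real.volume_Ioo, sub_zero]
      _ ≤ volume S := measure_mono hsub

lemma map_quantile (hF : ∀ t, F t = (μ (Iic t)).toReal)
    (hQ : ∀ p, Q p = sInf {x : ℝ | p ≤ F x}) :
    Measure.map Q (volume.restrict (Icc (0:ℝ) 1)) = μ := by
  have hQae := aemeasurable_quantile μ F Q hF hQ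
  haveI : IsFiniteMeasure (Measure.map Q (volume.restrict (Icc (0:ℝ) 1))) := by
    constructor
    rw [Measure.map_apply_of_aemeasurable hQae MeasurableSet.univ]
    simp [Real.volume_Icc]
  refine Measure.ext_of_Iic _ _ fun x => ?_
  rw [Measure.map_apply_of_aemeasurable hQae measurableSet_Iic,
    Measure.restrict_apply' measurableSet_Icc, ← ofReal_F μ F hF]
  refine volume_quantile_inter μ F Q hF hQ (F_nonneg μ F hF x) (F_le_one μ F hF x) _
    (fun p hp => ?_) inter_subset_right
  rw [mem_inter_iff, mem_preimage, mem_Iic, and_iff_left (Ioo_subset_Icc_self hp),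
    quantile_le_iff μ F Q hF hQ hp.1 hp.2]

end Quantile

/-! ### Couplings: Fréchet bounds and cell identities -/

section Coupling

variable {π' : Measure (ℝ × ℝ)} {μ₁ μ₂ : Measure ℝ}
  [IsProbabilityMeasure μ₁] [IsProbabilityMeasure μ₂]

lemma coupling_prob (h1 : π'.map Prod.fst = μ₁) : IsProbabilityMeasure π' := by
  constructor
  have := congrArg (fun ν : Measure ℝ => ν univ) h1
  simpa [Measure.map_apply measurable_fst MeasurableSet.univ] using this

lemma coupling_fst (h1 : π'.map Prod.fst = μ₁) (a : ℝ) :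
    π' (Iic a ×ˢ (univ : Set ℝ)) = μ₁ (Iic a) := by
  rw [← h1, Measure.map_apply measurable_fst measurableSet_Iic]
  congr 1
  ext p
  simp [Set.mem_prod]

lemma coupling_snd (h2 : π'.map Prod.snd = μ₂) (b : ℝ) :
    π' ((univ : Set ℝ) ×ˢ Iic b) = μ₂ (Iic b) := by
  rw [← h2, Measure.map_apply measurable_snd measurableSet_Iic]
  congr 1
  ext p
  simp [Set.mem_prod]

lemma frechet (h1 : π'.map Prod.fst = μ₁) (h2 : π'.map Prod.snd = μ₂) (a b : ℝ) :
    π' (Iic a ×ˢ Iic b) ≤ min (μ₁ (Iic a)) (μ₂ (Iic b)) := by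
  refine le_min ?_ ?_
  · rw [← coupling_fst h1 a]
    exact measure_mono fun p hp => ⟨hp.1, trivial⟩
  · rw [← coupling_snd h2 b]
    exact measure_mono fun p hp => ⟨trivial, hp.2⟩

lemma rect_ne_top (h2 : π'.map Prod.snd = μ₂) (a b : ℝ) :
    π' (Iic a ×ˢ Iic b) ≠ ⊤ := by
  refine ne_top_of_le_ne_top (measure_ne_top μ₂ (Iic b)) ?_
  rw [← coupling_snd h2 b]
  exact measure_mono fun p hp => ⟨trivial, hp.2⟩

lemma cellA_apply (h2 : π'.map Prod.snd = μ₂) (s t : ℝ) :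
    π' {p : ℝ × ℝ | p.2 ≤ s - t ∧ s < p.1}
      = μ₂ (Iic (s - t)) - π' (Iic s ×ˢ Iic (s - t)) := by
  have hset : {p : ℝ × ℝ | p.2 ≤ s - t ∧ s < p.1}
      = ((univ : Set ℝ) ×ˢ Iic (s - t)) \ (Iic s ×ˢ Iic (s - t)) := by
    ext p
    simp only [mem_setOf_eq, mem_diff, Set.mem_prod, mem_univ, true_and, mem_Iic, not_and,
      not_le]
    constructor
    · rintro ⟨hy, hx⟩
      exact ⟨hy, fun hxs => absurd hx (not_lt.mpr hxs)⟩
    · rintro ⟨hy, himp⟩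
      refine ⟨hy, ?_⟩
      by_contra hx
      exact absurd hy (not_le.mpr (himp (not_lt.mp hx)))
  rw [hset, measure_diff (Set.prod_mono (subset_univ _) Subset.rfl)
    ((measurableSet_Iic.prod measurableSet_Iic).nullMeasurableSet)
    (rect_ne_top h2 s (s - t)), coupling_snd h2]

lemma cellB_apply (h1 : π'.map Prod.fst = μ₁) (h2 : π'.map Prod.snd = μ₂) (s t : ℝ) :
    π' {p : ℝ × ℝ | p.1 ≤ s - t ∧ s < p.2}
      = μ₁ (Iic (s - t)) - π' (Iic (s - t) ×ˢ Iic s) := by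
  have hset : {p : ℝ × ℝ | p.1 ≤ s - t ∧ s < p.2}
      = (Iic (s - t) ×ˢ (univ : Set ℝ)) \ (Iic (s - t) ×ˢ Iic s) := by
    ext p
    simp only [mem_setOf_eq, mem_diff, Set.mem_prod, mem_univ, and_true, mem_Iic, not_and,
      not_le]
    constructor
    · rintro ⟨hy, hx⟩
      exact ⟨hy, fun _ => hx⟩
    · rintro ⟨hy, himp⟩
      exact ⟨hy, himp hy⟩
  rw [hset, measure_diff (Set.prod_mono Subset.rfl (subset_univ _))
    ((measurableSet_Iic.prod measurableSet_Iic).nullMeasurableSet)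
    (rect_ne_top h2 (s - t) s), coupling_fst h1]

end Coupling

/-! ### The master formula -/

lemma master_formula (q : ℝ) (hq : 1 ≤ q) (π' : Measure (ℝ × ℝ)) [IsProbabilityMeasure π'] :
    transportCost q π'
      = ∫⁻ u : ℝ × ℝ, (π' {p : ℝ × ℝ | p.2 ≤ u.2 - u.1 ∧ u.2 < p.1}
          + π' {p : ℝ × ℝ | p.1 ≤ u.2 - u.1 ∧ u.2 < p.2})
        ∂((G q hq).measure.prod volume) := by
  set ρ := (G q hq).measure with hρ
  set f : (ℝ × ℝ) → (ℝ × ℝ) → ℝ≥0∞ := fun m u =>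
    (if m.2 ≤ u.2 - u.1 ∧ u.2 < m.1 then 1 else 0)
      + (if m.1 ≤ u.2 - u.1 ∧ u.2 < m.2 then 1 else 0) with hf
  have hmeas : Measurable (Function.uncurry f) := by
    apply Measurable.add
    · refine Measurable.ite ?_ measurable_const measurable_const
      exact measurableSet_le (measurable_fst.snd)
        ((measurable_snd.snd).sub (measurable_snd.fst)) |>.inter
        (measurableSet_lt (measurable_snd.snd) (measurable_fst.fst))
    · refine Measurable.ite ?_ measurable_const measurable_const
      exact measurableSet_le (measurable_fst.fst)
        ((measurable_snd.snd).sub (measurable_snd.fst)) |>.inter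
        (measurableSet_lt (measurable_snd.snd) (measurable_fst.snd))
  have stepA : ∀ m : ℝ × ℝ, ∫⁻ u, f m u ∂(ρ.prod volume)
      = ENNReal.ofReal (|m.1 - m.2| ^ q) := by
    intro m
    rw [MeasureTheory.lintegral_prod _ (hmeas.of_uncurry_left).aemeasurable]
    have hinner : ∀ t : ℝ, ∫⁻ s, f m (t, s) ∂volume
        = ENNReal.ofReal (m.1 - m.2 - t) + ENNReal.ofReal (m.2 - m.1 - t) := by
      intro t
      have heq : (fun s => f m (t, s))
          = fun s => ((Ico (m.2 + t) m.1).indicator 1 s + (Ico (m.1 + t) m.2).indicator 1 s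
            : ℝ≥0∞) := by
        funext s
        simp only [hf, Set.indicator_apply, Set.mem_Ico, Pi.one_apply]
        congr 1
        · by_cases h : m.2 ≤ s - t ∧ s < m.1
          · rw [if_pos h, if_pos ⟨by linarith [h.1], h.2⟩]
          · rw [if_neg h, if_neg]
            intro hc
            exact h ⟨by linarith [hc.1], hc.2⟩
        · by_cases h : m.1 ≤ s - t ∧ s < m.2
          · rw [if_pos h, if_pos ⟨by linarith [h.1], h.2⟩]
          · rw [if_neg h, if_neg]
            intro hc
            exact h ⟨by linarith [hc.1], hc.2⟩
      rw [heq, lintegral_add_left (measurable_one.indicator measurableSet_Ico),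
        lintegral_indicator_one measurableSet_Ico, lintegral_indicator_one measurableSet_Ico,
        Real.volume_Ico, Real.volume_Ico]
      congr 2 <;> ring
    calc ∫⁻ t, (∫⁻ s, f m (t, s) ∂volume) ∂ρ
        = ∫⁻ t, (ENNReal.ofReal (m.1 - m.2 - t) + ENNReal.ofReal (m.2 - m.1 - t)) ∂ρ := by
          exact lintegral_congr hinner
      _ = ENNReal.ofReal (|m.1 - m.2| ^ q) := (key_pointwise q hq m.1 m.2).symm
  have stepC : ∀ u : ℝ × ℝ, ∫⁻ m, f m u ∂π'
      = π' {p : ℝ × ℝ | p.2 ≤ u.2 - u.1 ∧ u.2 < p.1}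
        + π' {p : ℝ × ℝ | p.1 ≤ u.2 - u.1 ∧ u.2 < p.2} := by
    intro u
    have hs1 : MeasurableSet {p : ℝ × ℝ | p.2 ≤ u.2 - u.1 ∧ u.2 < p.1} :=
      (measurableSet_le measurable_snd measurable_const).inter
        (measurableSet_lt measurable_const measurable_fst)
    have hs2 : MeasurableSet {p : ℝ × ℝ | p.1 ≤ u.2 - u.1 ∧ u.2 < p.2} :=
      (measurableSet_le measurable_fst measurable_const).inter
        (measurableSet_lt measurable_const measurable_snd)
    have heq : (fun m => f m u)
        = fun m => (({p : ℝ × ℝ | p.2 ≤ u.2 - u.1 ∧ u.2 < p.1}).indicator 1 m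
          + ({p : ℝ × ℝ | p.1 ≤ u.2 - u.1 ∧ u.2 < p.2}).indicator 1 m : ℝ≥0∞) := by
      funext m
      simp [hf, Set.indicator_apply]
    rw [heq, lintegral_add_left (measurable_one.indicator hs1),
      lintegral_indicator_one hs1, lintegral_indicator_one hs2]
  calc transportCost q π' = ∫⁻ m, (∫⁻ u, f m u ∂(ρ.prod volume)) ∂π' := by
        rw [transportCost]
        exact lintegral_congr fun m => (stepA m).symm
    _ = ∫⁻ u, (∫⁻ m, f m u ∂π') ∂(ρ.prod volume) :=
        lintegral_lintegral_swap hmeas.aemeasurable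
    _ = _ := lintegral_congr stepC

end WassersteinAux

theorem wasserstein_eq_left_plus_right_effort
    (μ₁ μ₂ : Measure ℝ) [IsProbabilityMeasure μ₁] [IsProbabilityMeasure μ₂]
    (q : ℝ) (hq : 1 ≤ q)
    (hm₁ : (∫⁻ x, ENNReal.ofReal (|x| ^ q) ∂μ₁) < ⊤)
    (hm₂ : (∫⁻ x, ENNReal.ofReal (|x| ^ q) ∂μ₂) < ⊤)
    (F₁ F₂ : ℝ → ℝ)
    (hF₁ : ∀ t, F₁ t = (μ₁ (Iic t)).toReal)
    (hF₂ : ∀ t, F₂ t = (μ₂ (Iic t)).toReal)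
    (Q₁ Q₂ : ℝ → ℝ)
    (hQ₁ : ∀ p, Q₁ p = sInf {x : ℝ | p ≤ F₁ x})
    (hQ₂ : ∀ p, Q₂ p = sInf {x : ℝ | p ≤ F₂ x})
    (π : Measure (ℝ × ℝ))
    (hπ : π = Measure.map (fun p => (Q₁ p, Q₂ p)) (volume.restrict (Icc (0:ℝ) 1))) :
    wassersteinDist q μ₁ μ₂
      = ((∫⁻ x in {x : ℝ × ℝ | x.2 < x.1}, ENNReal.ofReal (|x.1 - x.2| ^ q) ∂π)
          + (∫⁻ x in {x : ℝ × ℝ | x.1 < x.2}, ENNReal.ofReal (|x.1 - x.2| ^ q) ∂π))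
        ^ (1 / q) := by
  have hq0 : (0:ℝ) < q := lt_of_lt_of_le one_pos hq
  have hQ1ae := WassersteinAux.aemeasurable_quantile μ₁ F₁ Q₁ hF₁ hQ₁
  have hQ2ae := WassersteinAux.aemeasurable_quantile μ₂ F₂ Q₂ hF₂ hQ₂
  have hpair : AEMeasurable (fun p => (Q₁ p, Q₂ p)) (volume.restrict (Icc (0:ℝ) 1)) :=
    hQ1ae.prodMk hQ2ae
  have hfst : π.map Prod.fst = μ₁ := by
    rw [hπ, AEMeasurable.map_map_of_aemeasurable measurable_fst.aemeasurable hpair]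
    exact WassersteinAux.map_quantile μ₁ F₁ Q₁ hF₁ hQ₁
  have hsnd : π.map Prod.snd = μ₂ := by
    rw [hπ, AEMeasurable.map_map_of_aemeasurable measurable_snd.aemeasurable hpair]
    exact WassersteinAux.map_quantile μ₂ F₂ Q₂ hF₂ hQ₂
  haveI hπprob : IsProbabilityMeasure π := WassersteinAux.coupling_prob hfst
  have hrect : ∀ a b : ℝ, π (Iic a ×ˢ Iic b) = min (μ₁ (Iic a)) (μ₂ (Iic b)) := by
    intro a b
    rw [hπ, Measure.map_apply_of_aemeasurable hpair
      (measurableSet_Iic.prod measurableSet_Iic),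
      Measure.restrict_apply' measurableSet_Icc]
    have hmin0 : 0 ≤ min (F₁ a) (F₂ b) :=
      le_min (WassersteinAux.F_nonneg μ₁ F₁ hF₁ a) (WassersteinAux.F_nonneg μ₂ F₂ hF₂ b)
    have hmin1 : min (F₁ a) (F₂ b) ≤ 1 :=
      (min_le_left _ _).trans (WassersteinAux.F_le_one μ₁ F₁ hF₁ a)
    have hminR : min (μ₁ (Iic a)) (μ₂ (Iic b)) = ENNReal.ofReal (min (F₁ a) (F₂ b)) := by
      rw [← WassersteinAux.ofReal_F μ₁ F₁ hF₁ a, ← WassersteinAux.ofReal_F μ₂ F₂ hF₂ b]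
      have hmono : Monotone ENNReal.ofReal := fun _ _ h => ENNReal.ofReal_le_ofReal h
      exact (hmono.map_min).symm
    rw [hminR]
    refine WassersteinAux.volume_quantile_inter μ₁ F₁ Q₁ hF₁ hQ₁ hmin0 hmin1 _
      (fun p hp => ?_) inter_subset_right
    rw [mem_inter_iff, and_iff_left (Ioo_subset_Icc_self hp), mem_preimage]
    show (Q₁ p, Q₂ p) ∈ Iic a ×ˢ Iic b ↔ _
    rw [Set.mem_prod, mem_Iic, mem_Iic,
      WassersteinAux.quantile_le_iff μ₁ F₁ Q₁ hF₁ hQ₁ hp.1 hp.2 a,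
      WassersteinAux.quantile_le_iff μ₂ F₂ Q₂ hF₂ hQ₂ hp.1 hp.2 b, le_min_iff]
  have hcost : ∀ π₀ : Measure (ℝ × ℝ), π₀.map Prod.fst = μ₁ → π₀.map Prod.snd = μ₂ →
      transportCost q π ≤ transportCost q π₀ := by
    intro π₀ h1 h2
    haveI := WassersteinAux.coupling_prob h1
    rw [WassersteinAux.master_formula q hq π, WassersteinAux.master_formula q hq π₀]
    refine lintegral_mono fun u => add_le_add ?_ ?_
    · rw [WassersteinAux.cellA_apply hsnd u.2 u.1, WassersteinAux.cellA_apply h2 u.2 u.1]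
      refine tsub_le_tsub_left ?_ _
      rw [hrect]
      exact WassersteinAux.frechet h1 h2 _ _
    · rw [WassersteinAux.cellB_apply hfst hsnd u.2 u.1,
        WassersteinAux.cellB_apply h1 h2 u.2 u.1]
      refine tsub_le_tsub_left ?_ _
      rw [hrect]
      exact WassersteinAux.frechet h1 h2 _ _
  have hinf : (⨅ (π₀ : Measure (ℝ × ℝ))
      (_ : π₀.map Prod.fst = μ₁ ∧ π₀.map Prod.snd = μ₂), transportCost q π₀)
      = transportCost q π := by
    apply le_antisymm
    · exact iInf₂_le π ⟨hfst, hsnd⟩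
    · exact le_iInf₂ fun π₀ h => hcost π₀ h.1 h.2
  have hU : MeasurableSet {x : ℝ × ℝ | x.2 < x.1} :=
    measurableSet_lt measurable_snd measurable_fst
  have hV : MeasurableSet {x : ℝ × ℝ | x.1 < x.2} :=
    measurableSet_lt measurable_fst measurable_snd
  have hdisj : Disjoint {x : ℝ × ℝ | x.2 < x.1} {x : ℝ × ℝ | x.1 < x.2} :=
    Set.disjoint_left.mpr fun x h1 h2 => absurd (mem_setOf_eq ▸ h2) (not_lt.mpr (le_of_lt h1))
  have hsplit : (∫⁻ x in {x : ℝ × ℝ | x.2 < x.1}, ENNReal.ofReal (|x.1 - x.2| ^ q) ∂π)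
      + (∫⁻ x in {x : ℝ × ℝ | x.1 < x.2}, ENNReal.ofReal (|x.1 - x.2| ^ q) ∂π)
      = transportCost q π := by
    rw [← lintegral_union hV hdisj, transportCost]
    conv_rhs => rw [← lintegral_add_compl
      (fun x : ℝ × ℝ => ENNReal.ofReal (|x.1 - x.2| ^ q)) (hU.union hV) (μ := π)]
    have hcompl : ∫⁻ x in ({x : ℝ × ℝ | x.2 < x.1} ∪ {x : ℝ × ℝ | x.1 < x.2})ᶜ,
        ENNReal.ofReal (|x.1 - x.2| ^ q) ∂π = 0 := by
      have hzero : ∀ x ∈ ({x : ℝ × ℝ | x.2 < x.1} ∪ {x : ℝ × ℝ | x.1 < x.2})ᶜ,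
          ENNReal.ofReal (|x.1 - x.2| ^ q) = (fun _ : ℝ × ℝ => (0:ENNReal)) x := by
        intro x hx
        have hx' : x.1 = x.2 := by
          simp only [mem_compl_iff, mem_union, mem_setOf_eq, not_or, not_lt] at hx
          exact le_antisymm hx.1 hx.2
        show ENNReal.ofReal (|x.1 - x.2| ^ q) = (0:ENNReal)
        rw [hx', sub_self, abs_zero, Real.zero_rpow hq0.ne', ENNReal.ofReal_zero]
      rw [setLIntegral_congr_fun_ae (hU.union hV).compl (ae_of_all _ hzero), lintegral_zero]
    rw [hcompl, add_zero]
  rw [wassersteinDist, hinf, ← hsplit]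
end

section
/- Let f(x) = Σ_{i=1}^n f_i(x_i) be an additive model of independent real random variables X₁,…,Xₙ, and for S ⊆ N define the marginal game v^ME(S) = E_{X'}[f(X_S, X'_{-S})] evaluated at X_S (expectation over an independent copy in the complementary coordinates). Then the Shapley value of player i for this game equals φ_i[v^ME] = f_i(X_i) - E[f_i(X_i)]. -/
open MeasureTheory Set Finset ProbabilityTheory

lemma shapley_weight_sum (n : ℕ) (i : Fin n) :
    ∑ S ∈ (Finset.univ.erase i).powerset,
      ((Nat.factorial S.card * Nat.factorial (n - S.card - 1) : ℝ) / Nat.factorial n) = 1 := by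
  have hn : 0 < n := i.pos
  have hcard : (Finset.univ.erase i).card = n - 1 := by
    rw [Finset.card_erase_of_mem (Finset.mem_univ i), Finset.card_univ, Fintype.card_fin]
  rw [Finset.sum_powerset_apply_card
      (fun m => ((Nat.factorial m * Nat.factorial (n - m - 1) : ℝ) / Nat.factorial n)), hcard]
  have : ∀ m ∈ Finset.range (n - 1 + 1),
      (n-1).choose m • ((Nat.factorial m * Nat.factorial (n - m - 1) : ℝ) / Nat.factorial n)
      = (1 : ℝ) / n := by
    intro m hm
    rw [Finset.mem_range, Nat.lt_succ_iff] at hm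
    have h1 : n - m - 1 = (n - 1) - m := by omega
    rw [nsmul_eq_mul, h1]
    have key : ((n-1).choose m * Nat.factorial m * Nat.factorial ((n-1) - m) : ℕ)
        = Nat.factorial (n-1) := Nat.choose_mul_factorial_mul_factorial hm
    have hnf : (Nat.factorial n : ℝ) = n * Nat.factorial (n - 1) := by
      rw [← Nat.succ_pred_eq_of_pos hn, Nat.factorial_succ]
      push_cast
      simp [Nat.succ_pred_eq_of_pos hn]
    field_simp [hnf]
    rw [hnf, ← key]; push_cast
    ring
  rw [Finset.sum_congr rfl this, Finset.sum_const, Finset.card_range]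
  rw [nsmul_eq_mul]
  have : (n - 1 + 1 : ℕ) = n := by omega
  rw [this]
  field_simp

theorem marginal_shapley_of_additive_model
    {Ω : Type*} [MeasurableSpace Ω] (P : Measure Ω) [IsProbabilityMeasure P]
    (n : ℕ) (X : Fin n → Ω → ℝ) (hXm : ∀ i, Measurable (X i))
    (hXind : iIndepFun X P)
    (f : Fin n → ℝ → ℝ) (hfm : ∀ i, Measurable (f i))
    (hfint : ∀ i, Integrable (fun ω => f i (X i ω)) P)
    (ν : Measure (Fin n → ℝ)) (hν : ν = P.map (fun ω i => X i ω))
    (vME : Finset (Fin n) → Ω → ℝ)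
    (hvME : ∀ S ω, vME S ω =
      ∫ x', (∑ j, f j (if j ∈ S then X j ω else x' j)) ∂ν)
    (φ : Fin n → Ω → ℝ)
    (hφ : ∀ i ω, φ i ω = ∑ S ∈ (Finset.univ.erase i).powerset,
      ((Nat.factorial S.card * Nat.factorial (n - S.card - 1) : ℝ) / Nat.factorial n)
        * (vME (insert i S) ω - vME S ω)) :
    ∀ i ω, φ i ω = f i (X i ω) - ∫ ω', f i (X i ω') ∂P := by
  intro i ω
  have hT : Measurable (fun ω i => X i ω) := measurable_pi_lambda _ hXm
  -- key computation of vME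
  have key : ∀ S : Finset (Fin n), vME S ω =
      ∑ j, (if j ∈ S then f j (X j ω) else ∫ ω', f j (X j ω') ∂P) := by
    intro S
    rw [hvME]
    have hintj : ∀ j, Integrable (fun x' : Fin n → ℝ => f j (x' j)) ν := by
      intro j
      rw [hν]
      exact (integrable_map_measure
        (g := fun x' : Fin n → ℝ => f j (x' j))
        (((hfm j).comp (measurable_pi_apply j)).aestronglyMeasurable) hT.aemeasurable).mpr
        (hfint j)
    have hνprob : IsProbabilityMeasure ν := hν ▸ Measure.isProbabilityMeasure_map hT.aemeasurable
    have hint : ∀ j, Integrable (fun x' : Fin n → ℝ => f j (if j ∈ S then X j ω else x' j)) ν := by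
      intro j
      by_cases h : j ∈ S
      · simp only [h, if_true]; exact integrable_const _
      · simp only [h, if_false]; exact hintj j
    rw [integral_finset_sum _ (fun j _ => hint j)]
    refine Finset.sum_congr rfl fun j _ => ?_
    by_cases h : j ∈ S
    · simp [h]
    · simp only [h, if_false]
      rw [hν]
      exact integral_map (f := fun x' : Fin n → ℝ => f j (x' j)) hT.aemeasurable
        (((hfm j).comp (measurable_pi_apply j)).aestronglyMeasurable)
  -- marginal contribution is constant
  have hdiff : ∀ S ∈ (Finset.univ.erase i).powerset,
      vME (insert i S) ω - vME S ω = f i (X i ω) - ∫ ω', f i (X i ω') ∂P := by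
    intro S hS
    have hiS : i ∉ S := by
      intro h
      exact (Finset.mem_erase.mp (Finset.mem_powerset.mp hS h)).1 rfl
    rw [key, key, ← Finset.sum_sub_distrib]
    rw [Finset.sum_eq_single i]
    · simp [hiS]
    · intro j _ hj
      simp [Finset.mem_insert, hj]
    · intro h; exact absurd (Finset.mem_univ i) h
  rw [hφ, Finset.sum_congr rfl (fun S hS => by rw [hdiff S hS]), ← Finset.sum_mul,
    shapley_weight_sum, one_mul]
end
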